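/- arXiv:1309.4262 — 6 statements merged into one kernel-verified Lean document; each statement's English description precedes it below -/
import Mathlib

section
/- Let K be a compact topological group with Haar probability measure m, and let E ⊆ K be a Borel set with m(E) > 0. Define U := {k ∈ K : m(E ∩ k·E) > 0}. Then there exists a finite set F ⊆ K with |F| ≤ ⌊1/m(E)⌋ such that F·U = K. -/
/-!
Choose a finite set `F` for which the translates `f • E`, `f ∈ F`, are pairwise almost disjoint,
with `#F` maximal. Such translates have total measure `#F * m E ≤ 1`, which bounds `#F` (and makes
the maximum exist). If some `k` were outside `F * U`, then `k • E` would be almost disjoint from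
every `f • E`, since `m (f • E ∩ k • E) = m (E ∩ (f⁻¹ * k) • E)`, and adding `k` to `F` would
contradict maximality.
-/

open scoped Pointwise ENNReal

open MeasureTheory Function

theorem Finset.exists_card_maximal_of_card_le {α : Type*} {P : Finset α → Prop} {N : ℕ}
    (hP : P ∅) (hN : ∀ F, P F → F.card ≤ N) :
    ∃ F, P F ∧ ∀ G, P G → G.card ≤ F.card := by
  set S : Set ℕ := {n | ∃ F, P F ∧ F.card = n}
  have hS : BddAbove S := ⟨N, by rintro _ ⟨F, hF, rfl⟩; exact hN F hF⟩
  obtain ⟨F, hF, hcard⟩ : sSup S ∈ S := Nat.sSup_mem ⟨0, ∅, hP, rfl⟩ hS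
  exact ⟨F, hF, fun G hG => hcard ▸ le_csSup hS ⟨G, hG, rfl⟩⟩

theorem ENNReal.le_floor_one_div_toReal_of_mul_le_one {n : ℕ} {x : ℝ≥0∞} (hx₀ : x ≠ 0)
    (hx : x ≠ ∞) (h : n * x ≤ 1) : n ≤ ⌊1 / x.toReal⌋₊ := by
  have hpos : 0 < x.toReal := ENNReal.toReal_pos hx₀ hx
  have hreal : (n : ℝ) * x.toReal ≤ 1 := by
    simpa using ENNReal.toReal_mono ENNReal.one_ne_top h
  exact Nat.le_floor ((le_div_iff₀ hpos).2 hreal)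

section MulAction

variable {G α : Type*} [Group G] [MulAction G α] [MeasurableSpace α] {μ : Measure α} {E : Set α}

theorem notMem_of_notMem_mul (hE : 0 < μ E) {F : Set G} {k : G}
    (hk : k ∉ F * {g : G | 0 < μ (E ∩ g • E)}) : k ∉ F :=
  fun hkF => hk ⟨k, hkF, 1, by simpa using hE, mul_one k⟩

variable [SMulInvariantMeasure G α μ]

theorem measure_smul_inter_smul (a b : G) :
    μ (a • E ∩ b • E) = μ (E ∩ (a⁻¹ * b) • E) := by
  rw [← measure_smul μ a (E ∩ _), Set.smul_set_inter, smul_smul, mul_inv_cancel_left]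

theorem card_mul_measure_le_of_pairwise_aedisjoint [MeasurableConstSMul G α]
    (hE : NullMeasurableSet E μ) {F : Finset G}
    (hF : (F : Set G).Pairwise (AEDisjoint μ on fun f => f • E)) :
    (F.card : ℝ≥0∞) * μ E ≤ μ Set.univ :=
  calc (F.card : ℝ≥0∞) * μ E = ∑ f ∈ F, μ (f • E) := by simp [measure_smul]
    _ = μ (⋃ f ∈ F, f • E) := (measure_biUnion_finset₀ hF fun f _ => hE.smul f).symm
    _ ≤ μ Set.univ := measure_mono (Set.subset_univ _)

theorem aedisjoint_smul_of_notMem_mul {F : Set G} {k : G}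
    (hk : k ∉ F * {g : G | 0 < μ (E ∩ g • E)}) {f : G} (hf : f ∈ F) :
    AEDisjoint μ (f • E) (k • E) := by
  by_contra hne
  refine hk ⟨f, hf, f⁻¹ * k, ?_, mul_inv_cancel_left f k⟩
  show 0 < μ (E ∩ (f⁻¹ * k) • E)
  rw [← measure_smul_inter_smul]
  exact pos_iff_ne_zero.2 hne

end MulAction

theorem stmt1_general {K : Type*} [Group K] [TopologicalSpace K] [IsTopologicalGroup K]
    [MeasurableSpace K] [BorelSpace K]
    (m : Measure K) [m.IsHaarMeasure] [IsProbabilityMeasure m]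
    (E : Set K) (hE : MeasurableSet E) (hEpos : 0 < m E) :
    ∃ F : Finset K, F.card ≤ ⌊1 / (m E).toReal⌋₊ ∧
      (F : Set K) * {k : K | 0 < m (E ∩ k • E)} = Set.univ := by
  classical
  have hcard : ∀ F : Finset K, (F : Set K).Pairwise (AEDisjoint m on fun f => f • E) →
      F.card ≤ ⌊1 / (m E).toReal⌋₊ := fun F hF =>
    ENNReal.le_floor_one_div_toReal_of_mul_le_one hEpos.ne' (measure_ne_top m E)
      (measure_univ (μ := m) ▸ card_mul_measure_le_of_pairwise_aedisjoint hE.nullMeasurableSet hF)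
  obtain ⟨F, hF, hmax⟩ := Finset.exists_card_maximal_of_card_le (by simp) hcard
  refine ⟨F, hcard F hF, Set.eq_univ_of_forall fun k => by_contra fun hk => ?_⟩
  have hinsert : ((insert k F : Finset K) : Set K).Pairwise (AEDisjoint m on fun f => f • E) := by
    rw [Finset.coe_insert, Set.pairwise_insert]
    exact ⟨hF, fun f hf _ => ⟨(aedisjoint_smul_of_notMem_mul hk hf).symm,
      aedisjoint_smul_of_notMem_mul hk hf⟩⟩
  have := hmax _ hinsert
  rw [Finset.card_insert_of_notMem (notMem_of_notMem_mul hEpos hk)] at this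
  omega

/-- Syndeticity index bound for the self-correlation set of a positive-measure set in a
compact group. -/
theorem stmt1 {K : Type*} [Group K] [TopologicalSpace K] [IsTopologicalGroup K]
    [CompactSpace K] [T2Space K] [MeasurableSpace K] [BorelSpace K]
    (m : Measure K) [m.IsHaarMeasure] [IsProbabilityMeasure m]
    (E : Set K) (hE : MeasurableSet E) (hEpos : 0 < m E) :
    ∃ F : Finset K, F.card ≤ ⌊1 / (m E).toReal⌋₊ ∧
      (F : Set K) * {k : K | 0 < m (E ∩ k • E)} = Set.univ :=
  stmt1_general m E hE hEpos
end

section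
/- Let K be a compact topological group with Haar probability measure m, and let C, D ⊆ K be Borel sets with positive Haar measure. Define the open set U := {k ∈ K : m(C ∩ k·D) > 0}. Then there exists a finite set F ⊆ K with |F| ≤ ⌊1/(m(C)·m(D))⌋ such that F·U = K. -/
/-!
Averaging `h ↦ μ (C ∩ h • D)` over `μ` gives `μ C * μ D`, because `s ↦ ∫⁻ h, μ (s ∩ h • D) ∂μ`
is a finite left-invariant measure, hence by uniqueness of Haar measure the multiple `μ D` of `μ`.
So every translate `x • D` meets some translate `g • C` in measure at least `μ C * μ D`.
Pick greedily `xᵢ ∉ {g₁, …, gᵢ₋₁} • U` and such a `gᵢ`: then `gⱼ • C ∩ xᵢ • D` is null for `j < i`,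
so the sets `gᵢ • C ∩ xᵢ • D` are almost disjoint, each of measure at least `μ C * μ D`, and
there are at most `1 / (μ C * μ D)` of them. When the process stops, `{g₁, g₂, …} • U` covers.
-/

open scoped Pointwise ENNReal

open MeasureTheory Measure Set Topology Function

theorem Nat.le_floor_one_div_toReal {a : ℝ≥0∞} {n : ℕ} (ha : a ≠ 0) (ha' : a ≠ ∞)
    (h : n * a ≤ 1) : n ≤ ⌊1 / a.toReal⌋₊ := by
  apply Nat.le_floor
  rw [le_div_iff₀ (ENNReal.toReal_pos ha ha')]
  simpa [ENNReal.toReal_mul] using ENNReal.toReal_mono ENNReal.one_ne_top h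

section Overlap

variable {G : Type*} [Group G] [MeasurableSpace G] {μ : Measure G} {C D : Set G}

structure IsOverlapPacking (μ : Measure G) (C D : Set G) (P : Finset (G × G)) : Prop where
  le_measure : ∀ p ∈ P, μ C * μ D ≤ μ (p.1 • C ∩ p.2 • D)
  pairwise_aeDisjoint :
    (P : Set (G × G)).Pairwise (AEDisjoint μ on (fun p : G × G => p.1 • C ∩ p.2 • D))

theorem IsOverlapPacking.card_mul_le [MeasurableMul G] {P : Finset (G × G)}
    (hP : IsOverlapPacking μ C D P) (hC : MeasurableSet C) (hD : MeasurableSet D) :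
    P.card * (μ C * μ D) ≤ μ univ :=
  calc P.card * (μ C * μ D) = P.card • (μ C * μ D) := (nsmul_eq_mul _ _).symm
    _ ≤ ∑ p ∈ P, μ (p.1 • C ∩ p.2 • D) := Finset.card_nsmul_le_sum _ _ _ hP.le_measure
    _ ≤ μ univ := sum_measure_le_measure_univ
      (fun p _ => ((hC.const_smul p.1).inter (hD.const_smul p.2)).nullMeasurableSet)
      hP.pairwise_aeDisjoint

variable [IsMulLeftInvariant μ]

theorem measure_smul_inter_smul_s3 (g x : G) : μ (g • C ∩ x • D) = μ (C ∩ (g⁻¹ * x) • D) := by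
  rw [← measure_smul μ g⁻¹, smul_set_inter, inv_smul_smul, smul_smul]

theorem measure_smul_inter_smul_eq_zero_of_notMem_mul {F : Set G} {g x : G}
    (hx : x ∉ F * {k : G | 0 < μ (C ∩ k • D)}) (hg : g ∈ F) : μ (g • C ∩ x • D) = 0 := by
  by_contra hne
  refine hx ⟨g, hg, g⁻¹ * x, ?_, mul_inv_cancel_left g x⟩
  change 0 < μ (C ∩ (g⁻¹ * x) • D)
  rw [← measure_smul_inter_smul_s3]
  exact pos_iff_ne_zero.2 hne

theorem IsOverlapPacking.insert [DecidableEq G] {P : Finset (G × G)}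
    (hP : IsOverlapPacking μ C D P) (hpos : 0 < μ C * μ D) {g x : G}
    (hx : x ∉ (P.image Prod.fst : Set G) * {k : G | 0 < μ (C ∩ k • D)})
    (hg : μ C * μ D ≤ μ (g • C ∩ x • D)) :
    (g, x) ∉ P ∧ IsOverlapPacking μ C D (insert (g, x) P) := by
  have hnull : ∀ p ∈ P, μ (p.1 • C ∩ x • D) = 0 := fun p hp =>
    measure_smul_inter_smul_eq_zero_of_notMem_mul hx (Finset.mem_image_of_mem _ hp)
  refine ⟨fun hmem => ?_, ⟨?_, ?_⟩⟩
  · exact (hpos.trans_le hg).ne' (hnull _ hmem)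
  · exact Finset.forall_mem_insert _ _ _ |>.2 ⟨hg, hP.le_measure⟩
  · rw [Finset.coe_insert]
    refine hP.pairwise_aeDisjoint.insert fun p hp _ => ?_
    have : AEDisjoint μ (g • C ∩ x • D) (p.1 • C ∩ p.2 • D) :=
      measure_mono_null (fun z hz => by exact ⟨hz.2.1, hz.1.2⟩) (hnull p hp)
    exact ⟨this, this.symm⟩

end Overlap

section Translates

variable {G : Type*} [Group G] [TopologicalSpace G] [IsTopologicalGroup G] [MeasurableSpace G]
  {μ : Measure G} {C : Set G}

theorem lowerSemicontinuous_measure_inter_smul [OpensMeasurableSpace G] [InnerRegular μ]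
    (hC : MeasurableSet C) {U : Set G} (hU : IsOpen U) :
    LowerSemicontinuous fun h : G => μ (C ∩ h • U) := by
  intro h₀ t ht
  obtain ⟨L, hLsub, hL, htL⟩ := (hC.inter (hU.smul h₀).measurableSet).exists_lt_isCompact ht
  have hnear : ∀ᶠ h in 𝓝 h₀, ∀ y ∈ L, h⁻¹ * y ∈ U := by
    refine hL.eventually_forall_of_forall_eventually fun y hy => ?_
    have hy' : h₀⁻¹ * y ∈ U := mem_smul_set_iff_inv_smul_mem.1 (hLsub hy).2
    exact (continuous_fst.inv.mul continuous_snd).continuousAt.preimage_mem_nhds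
      (hU.mem_nhds hy')
  filter_upwards [hnear] with h hh
  refine htL.trans_le (measure_mono fun y hy => ⟨(hLsub hy).1, ?_⟩)
  exact mem_smul_set_iff_inv_smul_mem.2 (hh y hy)

/- The Borel σ-algebra of `G × G` can be strictly larger than the product σ-algebra, so Tonelli
does not apply to `(h, y) ↦ h⁻¹ * y`; instead, lower semicontinuity for open `D` is propagated
by a Dynkin-system argument. -/
theorem measurable_measure_inter_smul [BorelSpace G] [InnerRegular μ] [IsFiniteMeasure μ]
    (hC : MeasurableSet C) {D : Set G} (hD : MeasurableSet D) :
    Measurable fun h : G => μ (C ∩ h • D) := by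
  refine MeasurableSpace.induction_on_inter (C := fun D _ => Measurable fun h : G => μ (C ∩ h • D))
    BorelSpace.measurable_eq isPiSystem_isOpen (by simp)
    (fun U hU => (lowerSemicontinuous_measure_inter_smul hC hU).measurable) (fun D hD ih => ?_)
    (fun f hdisj hf ih => ?_) D hD
  · have hcompl (h : G) : μ (C ∩ h • Dᶜ) = μ C - μ (C ∩ h • D) := by
      rw [smul_set_compl, ← Set.sdiff_eq]
      exact ENNReal.eq_sub_of_add_eq (measure_ne_top μ _)
        (measure_sdiff_add_inter C (hD.const_smul h))
    simp_rw [hcompl]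
    exact measurable_const.sub ih
  · have hunion (h : G) : μ (C ∩ h • ⋃ i, f i) = ∑' i, μ (C ∩ h • f i) := by
      rw [smul_set_iUnion, inter_iUnion]
      exact measure_iUnion (fun i j hij => (disjoint_smul_set.2 (hdisj hij)).mono
        inter_subset_right inter_subset_right) fun i => hC.inter ((hf i).const_smul h)
    simp_rw [hunion]
    exact Measurable.tsum ih

variable [BorelSpace G] [InnerRegular μ] [IsFiniteMeasure μ] {D : Set G}

theorem bind_restrict_smul_apply (hD : MeasurableSet D) {s : Set G} (hs : MeasurableSet s) :
    (μ.bind fun h => μ.restrict (h • D)) s = ∫⁻ h, μ (s ∩ h • D) ∂μ := by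
  have hmeas : Measurable fun h : G => μ.restrict (h • D) :=
    measurable_of_measurable_coe _ fun t ht => by
      simpa only [restrict_apply ht] using measurable_measure_inter_smul ht hD
  simp_rw [bind_apply hs hmeas.aemeasurable, restrict_apply hs]

theorem isMulLeftInvariant_bind_restrict_smul [IsMulLeftInvariant μ] (hD : MeasurableSet D) :
    IsMulLeftInvariant (μ.bind fun h => μ.restrict (h • D)) where
  map_mul_left_eq_self g := by
    ext s hs
    have hshift (h : G) : μ ((g * ·) ⁻¹' s ∩ h • D) = μ (s ∩ (g * h) • D) := by
      rw [show (g * ·) ⁻¹' s = g⁻¹ • s from preimage_smul g s, ← measure_smul μ g,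
        smul_set_inter, smul_inv_smul, smul_smul]
    rw [map_apply (measurable_const_mul g) hs, bind_restrict_smul_apply hD hs,
      bind_restrict_smul_apply hD (measurable_const_mul g hs)]
    simp_rw [hshift]
    exact lintegral_mul_left_eq_self (fun h => μ (s ∩ h • D)) g

end Translates

section Compact

variable {G : Type*} [Group G] [TopologicalSpace G] [IsTopologicalGroup G] [CompactSpace G]
  [MeasurableSpace G] [BorelSpace G] {μ : Measure G} [IsHaarMeasure μ] {C D : Set G}

theorem lintegral_measure_inter_smul (hC : MeasurableSet C) (hD : MeasurableSet D) :
    ∫⁻ h, μ (C ∩ h • D) ∂μ = μ C * μ D := by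
  rw [← bind_restrict_smul_apply hD hC]
  set ν := μ.bind fun h => μ.restrict (h • D)
  have := isMulLeftInvariant_bind_restrict_smul (μ := μ) hD
  have hνuniv : ν univ = μ D * μ univ := by
    simp [ν, bind_restrict_smul_apply hD .univ]
  have : IsFiniteMeasure ν :=
    ⟨hνuniv ▸ ENNReal.mul_lt_top (measure_lt_top μ D) (measure_lt_top μ _)⟩
  have hν := isMulInvariant_eq_smul_of_compactSpace ν μ
  have hc : (haarScalarFactor ν μ : ℝ≥0∞) = μ D := by
    have := congr($hν univ)
    rw [hνuniv, Measure.smul_apply, ENNReal.smul_def, smul_eq_mul] at this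
    exact ((ENNReal.mul_left_inj (NeZero.ne _) (measure_ne_top μ _)).1 this).symm
  rw [hν, Measure.smul_apply, ENNReal.smul_def, hc, smul_eq_mul, mul_comm]

variable [IsProbabilityMeasure μ]

theorem exists_le_measure_smul_inter_smul (hC : MeasurableSet C) (hD : MeasurableSet D) (x : G) :
    ∃ g : G, μ C * μ D ≤ μ (g • C ∩ x • D) := by
  have hint := lintegral_measure_inter_smul (μ := μ) hC hD
  obtain ⟨h, hh⟩ := exists_lintegral_le (μ := μ) (f := fun h => μ (C ∩ h • D))
    (hint ▸ ENNReal.mul_ne_top (measure_ne_top μ C) (measure_ne_top μ D))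
  refine ⟨x * h⁻¹, ?_⟩
  rwa [measure_smul_inter_smul_s3, mul_inv_rev, inv_inv, inv_mul_cancel_right, ← hint]

theorem exists_isOverlapPacking_card_eq (hC : MeasurableSet C) (hD : MeasurableSet D)
    (hpos : 0 < μ C * μ D) (n : ℕ)
    (hcov : ∀ F : Finset G, F.card < n → (F : Set G) * {k : G | 0 < μ (C ∩ k • D)} ≠ univ) :
    ∃ P : Finset (G × G), P.card = n ∧ IsOverlapPacking μ C D P := by
  classical
  induction n with
  | zero => exact ⟨∅, rfl, by simp, by simp⟩
  | succ n ih =>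
    obtain ⟨P, hcard, hP⟩ := ih fun F hF => hcov F (hF.trans n.lt_succ_self)
    obtain ⟨x, hx⟩ := (ne_univ_iff_exists_notMem _).1 <|
      hcov (P.image Prod.fst) (Finset.card_image_le.trans_lt (hcard ▸ n.lt_succ_self))
    obtain ⟨g, hg⟩ := exists_le_measure_smul_inter_smul (μ := μ) hC hD x
    obtain ⟨hnotMem, hP'⟩ := hP.insert hpos hx hg
    exact ⟨_, by rw [Finset.card_insert_of_notMem hnotMem, hcard], hP'⟩

end Compact

theorem stmt3_general {K : Type*} [Group K] [TopologicalSpace K] [IsTopologicalGroup K]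
    [CompactSpace K] [MeasurableSpace K] [BorelSpace K]
    (m : Measure K) [m.IsHaarMeasure] [IsProbabilityMeasure m]
    (C D : Set K) (hC : MeasurableSet C) (hD : MeasurableSet D)
    (hCpos : 0 < m C) (hDpos : 0 < m D) :
    ∃ F : Finset K, F.card ≤ ⌊1 / ((m C).toReal * (m D).toReal)⌋₊ ∧
      (F : Set K) * {k : K | 0 < m (C ∩ k • D)} = Set.univ := by
  have hpos : 0 < m C * m D := ENNReal.mul_pos hCpos.ne' hDpos.ne'
  by_contra! hcov
  obtain ⟨P, hcard, hP⟩ := exists_isOverlapPacking_card_eq hC hD hpos _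
    fun F hF => hcov F (Nat.lt_succ_iff.1 hF)
  have hbound := hP.card_mul_le hC hD
  rw [hcard, measure_univ] at hbound
  have := Nat.le_floor_one_div_toReal hpos.ne' (by finiteness) hbound
  rw [ENNReal.toReal_mul] at this
  omega

/-- Syndeticity index bound for the correlation set of two positive-measure Borel sets in a
compact group. -/
theorem stmt3 {K : Type*} [Group K] [TopologicalSpace K] [IsTopologicalGroup K]
    [CompactSpace K] [T2Space K] [MeasurableSpace K] [BorelSpace K]
    (m : Measure K) [m.IsHaarMeasure] [IsProbabilityMeasure m]
    (C D : Set K) (hC : MeasurableSet C) (hD : MeasurableSet D)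
    (hCpos : 0 < m C) (hDpos : 0 < m D) :
    ∃ F : Finset K, F.card ≤ ⌊1 / ((m C).toReal * (m D).toReal)⌋₊ ∧
      (F : Set K) * {k : K | 0 < m (C ∩ k • D)} = Set.univ :=
  stmt3_general m C D hC hD hCpos hDpos
end

section
/- Let X be a locally compact Hausdorff space and μ a regular Borel measure on X. If K ⊆ X is compact and U ⊆ X is open with K ⊆ U and μ(U) < ∞, then there exists a closed μ-Jordan measurable set C (i.e., a closed set whose topological boundary has μ-measure zero) with K ⊆ C ⊆ U. -/
/-!
Take an Urysohn function `f : X → [0, 1]` equal to `1` on `K` and to `0` off `U`. For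
`0 < t < 1` the superlevel set `{t ≤ f}` is closed and lies between `K` and `U`, and its frontier
lies in the level set `{f = t}`. These level sets are disjoint and, inside `U`, carry finite
measure, so only countably many of them have positive measure: some `t ∈ (0, 1)` works.
-/

open MeasureTheory Set

theorem exists_mem_Ioo_measure_preimage_singleton_eq_zero {α : Type*} [MeasurableSpace α]
    (μ : Measure α) [SFinite μ] {f : α → ℝ} (hf : Measurable f) {a b : ℝ} (hab : a < b) :
    ∃ t ∈ Ioo a b, μ (f ⁻¹' {t}) = 0 := by
  by_contra! h
  have hsub : Ioo a b ⊆ {t | 0 < μ {x | f x = t}} := fun t ht => pos_iff_ne_zero.2 (h t ht)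
  have hcount : (Ioo a b).Countable := (Measure.countable_meas_level_set_pos hf).mono hsub
  exact (Cardinal.Real.Ioo_countable_iff.1 hcount).not_gt hab

theorem exists_mem_Ioo_measure_frontier_setOf_le_eq_zero {X : Type*} [TopologicalSpace X]
    [MeasurableSpace X] [OpensMeasurableSpace X] (μ : Measure X) [SFinite μ] {f : X → ℝ}
    (hf : Continuous f) {a b : ℝ} (hab : a < b) :
    ∃ t ∈ Ioo a b, μ (frontier {x | t ≤ f x}) = 0 := by
  obtain ⟨t, ht, hnull⟩ := exists_mem_Ioo_measure_preimage_singleton_eq_zero μ hf.measurable hab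
  refine ⟨t, ht, measure_mono_null ?_ hnull⟩
  exact (frontier_le_subset_eq continuous_const hf).trans fun x hx => hx.symm

theorem stmt4_general {X : Type*} [TopologicalSpace X] [T2Space X] [LocallyCompactSpace X]
    [MeasurableSpace X] [BorelSpace X]
    (μ : Measure X)
    (K U : Set X) (hK : IsCompact K) (hU : IsOpen U) (hKU : K ⊆ U) (hfin : μ U < ⊤) :
    ∃ C : Set X, IsClosed C ∧ μ (frontier C) = 0 ∧ K ⊆ C ∧ C ⊆ U := by
  obtain ⟨f, hfK, hfU, -, -⟩ := exists_continuous_one_zero_of_isCompact hK hU.isClosed_compl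
    (disjoint_compl_right_iff_subset.2 hKU)
  have : IsFiniteMeasure (μ.restrict U) := isFiniteMeasure_restrict.2 hfin.ne
  obtain ⟨t, ⟨ht0, ht1⟩, hnull⟩ :=
    exists_mem_Ioo_measure_frontier_setOf_le_eq_zero (μ.restrict U) f.continuous zero_lt_one
  have hclosed : IsClosed {x | t ≤ f x} := isClosed_le continuous_const f.continuous
  have hCU : {x | t ≤ f x} ⊆ U := fun x hx => by
    by_contra hxU
    exact (hx.trans_eq (hfU hxU)).not_gt ht0
  refine ⟨{x | t ≤ f x}, hclosed, ?_, fun x hx => ht1.le.trans_eq (hfK hx).symm, hCU⟩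
  rwa [← Measure.restrict_eq_self μ (hclosed.frontier_subset.trans hCU)]

/-- Between a compact set and an open superset of finite measure one can interpolate a closed
Jordan measurable set (boundary of measure zero). -/
theorem stmt4 {X : Type*} [TopologicalSpace X] [T2Space X] [LocallyCompactSpace X]
    [MeasurableSpace X] [BorelSpace X]
    (μ : Measure X) [μ.Regular]
    (K U : Set X) (hK : IsCompact K) (hU : IsOpen U) (hKU : K ⊆ U) (hfin : μ U < ⊤) :
    ∃ C : Set X, IsClosed C ∧ μ (frontier C) = 0 ∧ K ⊆ C ∧ C ⊆ U :=
  stmt4_general μ K U hK hU hKU hfin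
end

section
/- Let G be a group acting by homeomorphisms on a compact Hausdorff space Y, let μ be a probability measure on G whose support generates G as a semigroup, let ν be a μ-stationary Borel probability measure on Y with full support, and let φ : Y → ℝ be a continuous function with ∫_G φ(g·y) dμ(g) = φ(y) for all y ∈ Y. Then φ is G-invariant: φ(g·y) = φ(y) for all g ∈ G and y ∈ Y. -/
open MeasureTheory ProbabilityTheory

/-! Since `μ` has only countably many atoms and they generate `G`, the group `G` is countable,
so `μ`-integrals are absolutely convergent sums and `y ↦ ∫ φ (g • y) ^ 2 dμ` is continuous.
As `φ` is `μ`-harmonic, the variance of `g ↦ φ (g • y)` under `μ` is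
`∫ φ (g • y) ^ 2 dμ - φ y ^ 2`; stationarity of `ν`, applied to `φ ^ 2`, says that this continuous
nonnegative function of `y` has `ν`-integral zero, so by full support it vanishes everywhere.
Zero variance forces `φ (g • y) = φ y` for every atom `g` of `μ`, and the atoms generate `G` as a
semigroup. -/

theorem MeasureTheory.Measure.countable_setOf_measure_singleton_ne_zero {α : Type*}
    [MeasurableSpace α] [MeasurableSingletonClass α] (μ : Measure α) [SFinite μ] :
    {a : α | μ {a} ≠ 0}.Countable := by
  simpa only [pos_iff_ne_zero] using Measure.countable_meas_pos_of_disjoint_iUnion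
    (μ := μ) measurableSet_singleton fun a b hab ↦ Set.disjoint_singleton.2 hab

theorem MeasureTheory.Measure.summable_measureReal_singleton {α : Type*} [MeasurableSpace α]
    [MeasurableSingletonClass α] [Countable α] (μ : Measure α) [IsFiniteMeasure μ] :
    Summable fun a ↦ μ.real {a} := by
  refine ENNReal.summable_toReal ?_
  have h := congrArg (· Set.univ) (Measure.sum_smul_dirac μ)
  simp only [Measure.sum_apply _ MeasurableSet.univ, Measure.smul_apply,
    Measure.dirac_apply_of_mem (Set.mem_univ _), smul_eq_mul, mul_one] at h
  exact h ▸ measure_ne_top μ _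

theorem Subsemigroup.countable_of_closure_eq_top {M : Type*} [Monoid M] {s : Set M}
    (hs : s.Countable) (h : Subsemigroup.closure s = ⊤) : Countable M := by
  have : Countable s := hs.to_subtype
  have hle : Subsemigroup.closure s ≤ (Submonoid.closure s).toSubsemigroup :=
    Subsemigroup.closure_le.2 Submonoid.subset_closure
  rw [h, Submonoid.closure_eq_mrange] at hle
  rw [← Set.countable_univ_iff]
  exact (Set.countable_range (FreeMonoid.lift ((↑) : s → M))).mono fun x _ ↦ hle trivial

theorem Continuous.eq_zero_of_integral_eq_zero_of_nonneg {X : Type*} [TopologicalSpace X]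
    [CompactSpace X] [MeasurableSpace X] [OpensMeasurableSpace X] {ν : Measure X}
    [IsFiniteMeasure ν] [ν.IsOpenPosMeasure] {f : X → ℝ} (hf : Continuous f) (hf0 : 0 ≤ f)
    (hint : ∫ x, f x ∂ν = 0) : f = 0 := by
  by_contra! hne
  obtain ⟨x, hx⟩ := Function.ne_iff.1 hne
  exact (hf.integral_pos_of_hasCompactSupport_nonneg_nonzero (μ := ν)
    (HasCompactSupport.of_compactSpace f) hf0 hx).ne' hint

section Action

variable {G Y : Type*} [Monoid G] [MeasurableSpace G] [Countable G] [MeasurableSingletonClass G]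
  [TopologicalSpace Y] [CompactSpace Y] [MulAction G Y] {μ : Measure G} {f : Y → ℝ}

theorem memLp_comp_smul [IsFiniteMeasure μ] (hf : Continuous f) (y : Y) (p : ENNReal) :
    MemLp (fun g ↦ f (g • y)) p μ := by
  obtain ⟨C, hC⟩ := (isCompact_range hf).isBounded.exists_norm_le
  exact .of_bound .of_discrete C (.of_forall fun g ↦ hC _ ⟨_, rfl⟩)

theorem continuous_integral_comp_smul [ContinuousConstSMul G Y] [IsFiniteMeasure μ]
    (hf : Continuous f) :
    Continuous fun y ↦ ∫ g, f (g • y) ∂μ := by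
  obtain ⟨C, hC⟩ := (isCompact_range hf).isBounded.exists_norm_le
  simp_rw [fun y ↦ integral_countable ((memLp_comp_smul (μ := μ) hf y 1).integrable le_rfl)]
  refine continuous_tsum (fun g ↦ by fun_prop)
    ((Measure.summable_measureReal_singleton μ).mul_right C) fun g y ↦ ?_
  rw [norm_smul, Real.norm_of_nonneg measureReal_nonneg]
  exact mul_le_mul_of_nonneg_left (hC _ ⟨_, rfl⟩) measureReal_nonneg

theorem variance_comp_smul [IsProbabilityMeasure μ] (hf : Continuous f)
    (hharm : ∀ y, ∫ g, f (g • y) ∂μ = f y) (y : Y) :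
    Var[fun g ↦ f (g • y); μ] = ∫ g, f (g • y) ^ 2 ∂μ - f y ^ 2 := by
  rw [variance_eq_sub (memLp_comp_smul hf y 2), hharm]
  rfl

theorem smul_eq_of_measure_singleton_ne_zero [ContinuousConstSMul G Y] [MeasurableSpace Y]
    [BorelSpace Y] [IsProbabilityMeasure μ] {ν : Measure Y} [IsFiniteMeasure ν] [ν.IsOpenPosMeasure]
    (hstat : ∀ ψ : Y → ℝ, Continuous ψ → ∫ y, (∫ g, ψ (g • y) ∂μ) ∂ν = ∫ y, ψ y ∂ν)
    (hf : Continuous f) (hharm : ∀ y, ∫ g, f (g • y) ∂μ = f y) {g : G} (hg : μ {g} ≠ 0)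
    (y : Y) : f (g • y) = f y := by
  have hsq : Continuous fun y ↦ f y ^ 2 := hf.pow 2
  have hsq_mean : Continuous fun y ↦ ∫ g, f (g • y) ^ 2 ∂μ := continuous_integral_comp_smul hsq
  have hvar_cont : Continuous fun y ↦ Var[fun g ↦ f (g • y); μ] := by
    simp_rw [variance_comp_smul hf hharm]
    exact hsq_mean.sub hsq
  have hvar_int : ∫ y, Var[fun g ↦ f (g • y); μ] ∂ν = 0 := by
    simp_rw [variance_comp_smul hf hharm]
    rw [integral_sub (hsq_mean.integrable_of_hasCompactSupport (.of_compactSpace _))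
      (hsq.integrable_of_hasCompactSupport (.of_compactSpace _)), hstat _ hsq, sub_self]
  have hvar : Var[fun g ↦ f (g • y); μ] = 0 :=
    congrFun (hvar_cont.eq_zero_of_integral_eq_zero_of_nonneg (fun _ ↦ variance_nonneg _ _)
      hvar_int) y
  have hae := ae_eq_integral_of_variance_eq_zero (memLp_comp_smul hf y 2) hvar
  rw [hharm] at hae
  by_contra hne
  exact hg (measure_mono_null (Set.singleton_subset_iff.2 hne) (ae_iff.1 hae))

end Action

theorem stmt9_general {G Y : Type*} [Group G] [MeasurableSpace G] [MeasurableSingletonClass G]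
    [TopologicalSpace Y] [CompactSpace Y]
    [MeasurableSpace Y] [BorelSpace Y]
    [MulAction G Y] [ContinuousConstSMul G Y]
    (μ : Measure G) [IsProbabilityMeasure μ]
    (hadapted : Subsemigroup.closure {g : G | μ {g} ≠ 0} = ⊤)
    (ν : Measure Y) [IsProbabilityMeasure ν]
    (hstat : ∀ f : Y → ℝ, Continuous f →
      ∫ y, (∫ g, f (g • y) ∂μ) ∂ν = ∫ y, f y ∂ν)
    (hsupp : ∀ U : Set Y, IsOpen U → U.Nonempty → 0 < ν U)
    (φ : Y → ℝ) (hφ : Continuous φ)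
    (hharm : ∀ y : Y, ∫ g, φ (g • y) ∂μ = φ y) :
    ∀ (g : G) (y : Y), φ (g • y) = φ y := by
  have : Countable G := Subsemigroup.countable_of_closure_eq_top
    (Measure.countable_setOf_measure_singleton_ne_zero μ) hadapted
  have : ν.IsOpenPosMeasure := ⟨fun U hU hne ↦ (hsupp U hU hne).ne'⟩
  intro g y
  induction (hadapted ▸ Subsemigroup.mem_top g : g ∈ Subsemigroup.closure _) using
    Subsemigroup.closure_induction generalizing y with
  | mem g hg => exact smul_eq_of_measure_singleton_ne_zero hstat hφ hharm hg y
  | mul a b _ _ ha hb => rw [mul_smul, ha, hb]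

/-- A continuous `μ`-harmonic function on a compact `G`-space carrying a `μ`-stationary measure
of full support is `G`-invariant. -/
theorem stmt9 {G Y : Type*} [Group G] [MeasurableSpace G] [MeasurableSingletonClass G]
    [TopologicalSpace Y] [CompactSpace Y] [T2Space Y]
    [MeasurableSpace Y] [BorelSpace Y]
    [MulAction G Y] [ContinuousConstSMul G Y]
    (μ : Measure G) [IsProbabilityMeasure μ]
    (hadapted : Subsemigroup.closure {g : G | μ {g} ≠ 0} = ⊤)
    (ν : Measure Y) [IsProbabilityMeasure ν]
    (hstat : ∀ f : Y → ℝ, Continuous f →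
      ∫ y, (∫ g, f (g • y) ∂μ) ∂ν = ∫ y, f y ∂ν)
    (hsupp : ∀ U : Set Y, IsOpen U → U.Nonempty → 0 < ν U)
    (φ : Y → ℝ) (hφ : Continuous φ)
    (hharm : ∀ y : Y, ∫ g, φ (g • y) ∂μ = φ y) :
    ∀ (g : G) (y : Y), φ (g • y) = φ y :=
  stmt9_general μ hadapted ν hstat hsupp φ hφ hharm
end

section
/- Let G be a group with a unitary representation ρ on a Hilbert space H, and let λ₀ be a left-invariant mean on the space of matrix coefficients of unitary representations of G (i.e., λ₀(φ(g₀·)) = λ₀(φ) for all g₀). Then for all x, y ∈ H, λ₀ applied to the matrix coefficient g ↦ ⟨x, ρ(g)y⟩ equals ⟨P_ρ x, P_ρ y⟩, where P_ρ is the orthogonal projection onto the subspace of ρ-fixed vectors. -/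
/-!
The functional `z ↦ conj (λ₀ ⟪z, ρ(·) y⟫)` is bounded, since a positive unital functional has
norm at most `2` on bounded functions, so by Riesz it is `z ↦ ⟪b, z⟫` for some vector `b`.
Left invariance of `λ₀` makes `b` a fixed vector. Hence `λ₀ ⟪x, ρ(·) y⟫ = ⟪x, b⟫ = ⟪P x, b⟫`,
and the coefficient of the fixed vector `P x` is the constant `⟪P x, y⟫ = ⟪P x, P y⟫`.
-/

open scoped InnerProductSpace ComplexConjugate

structure IsMean {α : Type*} (lam : (α → ℂ) →ₗ[ℂ] ℂ) : Prop where
  map_one : lam (fun _ => 1) = 1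
  nonneg : ∀ φ : α → ℂ, (∀ a, (φ a).im = 0 ∧ 0 ≤ (φ a).re) → (lam φ).im = 0 ∧ 0 ≤ (lam φ).re

namespace IsMean

variable {α : Type*} {lam : (α → ℂ) →ₗ[ℂ] ℂ}

theorem map_const (hlam : IsMean lam) (c : ℂ) : lam (fun _ => c) = c := by
  have : (fun _ : α => c) = c • fun _ => (1 : ℂ) := by ext; simp
  rw [this, map_smul, hlam.map_one, smul_eq_mul, mul_one]

theorem norm_map_ofReal_le (hlam : IsMean lam) {f : α → ℝ} {C : ℝ} (hf : ∀ a, |f a| ≤ C) :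
    ‖lam (fun a => (f a : ℂ))‖ ≤ C := by
  have hupper := hlam.nonneg (fun a => (C : ℂ) - f a) fun a => by
    simpa using (abs_le.mp (hf a)).2
  have hlower := hlam.nonneg (fun a => (C : ℂ) + f a) fun a => by
    simpa [neg_le_iff_add_nonneg'] using (abs_le.mp (hf a)).1
  rw [show (fun a => (C : ℂ) - f a) = (fun _ => (C : ℂ)) - fun a => (f a : ℂ) from rfl,
    map_sub, hlam.map_const] at hupper
  rw [show (fun a => (C : ℂ) + f a) = (fun _ => (C : ℂ)) + fun a => (f a : ℂ) from rfl,
    map_add, hlam.map_const] at hlower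
  simp only [Complex.sub_re, Complex.sub_im, Complex.add_re, Complex.add_im,
    Complex.ofReal_re, Complex.ofReal_im] at hupper hlower
  rw [← Complex.re_add_im (lam _), show (lam fun a => (f a : ℂ)).im = 0 by linarith,
    Complex.ofReal_zero, zero_mul, add_zero, Complex.norm_real, Real.norm_eq_abs, abs_le]
  constructor <;> linarith

theorem norm_map_le (hlam : IsMean lam) {φ : α → ℂ} {C : ℝ} (hφ : ∀ a, ‖φ a‖ ≤ C) :
    ‖lam φ‖ ≤ 2 * C := by
  have hdecomp : φ = (fun a => ((φ a).re : ℂ)) + Complex.I • fun a => ((φ a).im : ℂ) := by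
    funext a; simp [Complex.ext_iff]
  have hre := hlam.norm_map_ofReal_le fun a => (Complex.abs_re_le_norm (φ a)).trans (hφ a)
  have him := hlam.norm_map_ofReal_le fun a => (Complex.abs_im_le_norm (φ a)).trans (hφ a)
  calc ‖lam φ‖
      ≤ ‖lam fun a => ((φ a).re : ℂ)‖ + ‖Complex.I • lam fun a => ((φ a).im : ℂ)‖ := by
        conv_lhs => rw [hdecomp, map_add, map_smul]
        exact norm_add_le _ _
    _ ≤ C + C := by rw [norm_smul, Complex.norm_I, one_mul]; exact add_le_add hre him
    _ = 2 * C := by ring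

end IsMean

section UnitaryRepresentation

variable {G H : Type*} [Group G] [NormedAddCommGroup H] [InnerProductSpace ℂ H]
  (ρ : G →* (H ≃ₗᵢ[ℂ] H))

theorem inner_map_left_eq_inner_map_inv (g : G) (u v : H) : ⟪ρ g u, v⟫_ℂ = ⟪u, ρ g⁻¹ v⟫_ℂ := by
  rw [LinearIsometryEquiv.inner_map_eq_flip, map_inv, LinearIsometryEquiv.inv_def]

theorem inner_map_right_of_fixed {v : H} (hv : ∀ g, ρ g v = v) (g : G) (y : H) :
    ⟪v, ρ g y⟫_ℂ = ⟪v, y⟫_ℂ := by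
  rw [← (ρ g).inner_map_map v y, hv]

theorem fixed_of_inner_map_left {b : H} (hb : ∀ g z, ⟪ρ g z, b⟫_ℂ = ⟪z, b⟫_ℂ) (g : G) :
    ρ g b = b :=
  ext_inner_left ℂ fun z => by rw [← hb g⁻¹ z, inner_map_left_eq_inner_map_inv, inv_inv]

theorem IsMean.exists_coeff_eq_inner [CompleteSpace H] {lam : (G → ℂ) →ₗ[ℂ] ℂ}
    (hlam : IsMean lam) (y : H) : ∃ b : H, ∀ z, lam (fun g => ⟪z, ρ g y⟫_ℂ) = ⟪z, b⟫_ℂ := by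
  let ℓ : H →ₗ[ℂ] ℂ :=
    { toFun := fun z => conj (lam fun g => ⟪z, ρ g y⟫_ℂ)
      map_add' := fun u v => by simp only [inner_add_left, ← map_add]; rfl
      map_smul' := fun c u => by
        simp only [inner_smul_left, RingHom.id_apply, smul_eq_mul]
        rw [show (fun g => conj c * ⟪u, ρ g y⟫_ℂ) = conj c • fun g => ⟪u, ρ g y⟫_ℂ from rfl,
          map_smul, smul_eq_mul, map_mul, Complex.conj_conj] }
  have hbound : ∀ z, ‖ℓ z‖ ≤ 2 * ‖y‖ * ‖z‖ := fun z =>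
    calc ‖ℓ z‖ = ‖lam fun g => ⟪z, ρ g y⟫_ℂ‖ := Complex.norm_conj _
      _ ≤ 2 * (‖z‖ * ‖y‖) := hlam.norm_map_le fun g =>
          (norm_inner_le_norm z (ρ g y)).trans_eq (by rw [LinearIsometryEquiv.norm_map])
      _ = 2 * ‖y‖ * ‖z‖ := by ring
  refine ⟨(InnerProductSpace.toDual ℂ H).symm (ℓ.mkContinuous _ hbound), fun z => ?_⟩
  rw [← inner_conj_symm, InnerProductSpace.toDual_symm_apply, LinearMap.mkContinuous_apply]
  exact (Complex.conj_conj _).symm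

theorem fixed_of_coeff_eq_inner {lam : (G → ℂ) →ₗ[ℂ] ℂ}
    (hinv : ∀ (x y : H) (g₀ : G),
      lam (fun g => ⟪x, ρ (g₀ * g) y⟫_ℂ) = lam (fun g => ⟪x, ρ g y⟫_ℂ))
    {y b : H} (hb : ∀ z, lam (fun g => ⟪z, ρ g y⟫_ℂ) = ⟪z, b⟫_ℂ) (g : G) : ρ g b = b := by
  refine fixed_of_inner_map_left ρ (fun h z => ?_) g
  simp_rw [← hb, inner_map_left_eq_inner_map_inv]
  simpa only [map_mul, LinearIsometryEquiv.coe_mul, Function.comp_apply] using hinv z y h⁻¹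

end UnitaryRepresentation

/-- A left-invariant mean applied to a matrix coefficient of a unitary representation computes
the inner product of the projections onto the fixed vectors. -/
theorem stmt10 {G : Type*} [Group G] {H : Type*} [NormedAddCommGroup H]
    [InnerProductSpace ℂ H] [CompleteSpace H]
    (ρ : G →* (H ≃ₗᵢ[ℂ] H))
    (lam : (G → ℂ) →ₗ[ℂ] ℂ)
    (hunital : lam (fun _ => 1) = 1)
    (hpos : ∀ φ : G → ℂ, (∀ g, (φ g).im = 0 ∧ 0 ≤ (φ g).re) →
      (lam φ).im = 0 ∧ 0 ≤ (lam φ).re)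
    (hinv : ∀ (x y : H) (g₀ : G),
      lam (fun g => (inner ℂ x (ρ (g₀ * g) y) : ℂ)) = lam (fun g => (inner ℂ x (ρ g y) : ℂ)))
    (P : H →L[ℂ] H)
    (hPfix : ∀ (v : H) (g : G), ρ g (P v) = P v)
    (hPproj : ∀ v w : H, (∀ g : G, ρ g w = w) → (inner ℂ (v - P v) w : ℂ) = 0)
    (x y : H) :
    lam (fun g => (inner ℂ x (ρ g y) : ℂ)) = (inner ℂ (P x) (P y) : ℂ) := by
  have hlam : IsMean lam := ⟨hunital, hpos⟩
  obtain ⟨b, hb⟩ := hlam.exists_coeff_eq_inner ρ y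
  have hPx : ⟪x, b⟫_ℂ = ⟪P x, b⟫_ℂ := by
    rw [← sub_eq_zero, ← inner_sub_left]
    exact hPproj x b (fixed_of_coeff_eq_inner ρ hinv hb)
  have hPy : ⟪P x, y⟫_ℂ = ⟪P x, P y⟫_ℂ := by
    rw [← sub_eq_zero, ← inner_sub_right]
    exact inner_eq_zero_symm.mp (hPproj y (P x) (hPfix x))
  calc lam (fun g => ⟪x, ρ g y⟫_ℂ)
      = ⟪P x, b⟫_ℂ := (hb x).trans hPx
    _ = lam (fun _ => ⟪P x, y⟫_ℂ) := by
        simp_rw [← hb, inner_map_right_of_fixed ρ (hPfix x)]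
    _ = ⟪P x, P y⟫_ℂ := (hlam.map_const _).trans hPy
end

section
/- Let G be a countable group acting on a compact Hausdorff space Y, and suppose y ∈ Y is an almost automorphic point: whenever g_α·y → y₀ for a net (g_α) in G, one has g_α⁻¹·y₀ → y. Let X be another compact Hausdorff G-space with a point x₀ whose orbit is dense. Then for every x ∈ X there exists y₀ ∈ Y such that (x, y) lies in the closure of the G-orbit of (x₀, y₀) in X × Y (with the diagonal action). -/
open Filter

/-- Joint extension via an almost automorphic point: if `y` is almost automorphic in `Y` and
`x₀` has dense orbit in `X`, then every `(x, y)` lies in the orbit closure of some `(x₀, y₀)`. -/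
theorem stmt13 {G X Y : Type*} [Group G] [Countable G]
    [TopologicalSpace X] [CompactSpace X] [T2Space X]
    [MulAction G X] [ContinuousConstSMul G X]
    [TopologicalSpace Y] [CompactSpace Y] [T2Space Y]
    [MulAction G Y] [ContinuousConstSMul G Y]
    (y : Y)
    (haa : ∀ {ι : Type*} (l : Filter ι) (gnet : ι → G) (y₀ : Y), l.NeBot →
      Tendsto (fun i => gnet i • y) l (nhds y₀) →
      Tendsto (fun i => (gnet i)⁻¹ • y₀) l (nhds y))
    (x₀ : X) (hx₀ : Dense (Set.range fun g : G => g • x₀)) :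
    ∀ x : X, ∃ y₀ : Y,
      (x, y) ∈ closure (Set.range fun g : G => ((g • x₀, g • y₀) : X × Y)) := by
  intro x
  -- a surjection ℕ → G
  have : Nonempty G := ⟨1⟩
  obtain ⟨e, he⟩ := exists_surjective_nat G
  -- The comap filter on G of neighborhoods of x is nontrivial by density
  have hne : (comap (fun g : G => g • x₀) (nhds x)).NeBot := by
    rw [comap_neBot_iff]
    intro U hU
    have hx : x ∈ closure (Set.range fun g : G => g • x₀) := hx₀ x
    rcases mem_closure_iff_nhds.mp hx U hU with ⟨p, hpU, g, hg⟩
    exact ⟨g, by simpa [hg] using hpU⟩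
  obtain ⟨u, hu⟩ := Filter.exists_ultrafilter_le (comap (fun g : G => g • x₀) (nhds x))
  have htx : Tendsto (fun g : G => g • x₀) u (nhds x) := tendsto_iff_comap.mpr hu
  -- Compactness: the ultrafilter image of g ↦ g⁻¹ • y converges
  obtain ⟨z, _, hz⟩ := isCompact_univ.ultrafilter_le_nhds (u.map fun g : G => g⁻¹ • y)
    (by simp)
  have hty : Tendsto (fun g : G => g⁻¹ • y) u (nhds z) := hz
  refine ⟨z, ?_⟩
  -- Reindex along ULift ℕ to match the universe of `haa`'s index type
  have hsurj : Function.Surjective (fun n : ULift ℕ => e n.down) :=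
    fun g => ⟨⟨(he g).choose⟩, (he g).choose_spec⟩
  have hlne : (comap (fun n : ULift ℕ => e n.down) (u : Filter G)).NeBot :=
    comap_neBot fun U hU => by
      obtain ⟨g, hg⟩ := u.nonempty_of_mem hU
      obtain ⟨n, hn⟩ := hsurj g
      exact ⟨n, by simpa [hn] using hg⟩
  have hcomp : Tendsto (fun n : ULift ℕ => e n.down) (comap (fun n : ULift ℕ => e n.down) ↑u) ↑u :=
    tendsto_comap
  have hty' : Tendsto (fun n : ULift ℕ => ((e n.down)⁻¹)⁻¹ • z)
      (comap (fun n : ULift ℕ => e n.down) ↑u) (nhds y) :=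
    haa _ (fun n : ULift ℕ => (e n.down)⁻¹) z hlne (hty.comp hcomp)
  have htz : Tendsto (fun n : ULift ℕ => e n.down • z)
      (comap (fun n : ULift ℕ => e n.down) ↑u) (nhds y) := by
    simpa using hty'
  have htx' : Tendsto (fun n : ULift ℕ => e n.down • x₀)
      (comap (fun n : ULift ℕ => e n.down) ↑u) (nhds x) := htx.comp hcomp
  have hprod : Tendsto (fun n : ULift ℕ => ((e n.down • x₀, e n.down • z) : X × Y))
      (comap (fun n : ULift ℕ => e n.down) ↑u) (nhds (x, y)) := htx'.prodMk_nhds htz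
  exact mem_closure_of_tendsto hprod (Eventually.of_forall fun n => ⟨e n.down, rfl⟩)
end
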